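/- Linnik's identity: for every integer n ≥ 2, Λ(n)/log n = ∑_{k ≥ 1} ((−1)^{k+1}/k) · τ'_k(n), where the sum is finite since τ'_k(n) = 0 for k > log n / log 2. -/

import Mathlib

/-- `τ'_k(n)`: the number of ordered `k`-tuples `(n₁, …, n_k)` of integers with
each `n_i ≥ 2` and `n₁ ⋯ n_k = n`. -/
noncomputable def tau' (k n : ℕ) : ℕ :=
  Nat.card {f : Fin k → ℕ // (∀ i, 2 ≤ f i) ∧ ∏ i, f i = n}

/-! Write `t = ζ - 1`, the indicator of `n ≥ 2`, so that `τ'_k` is the Dirichlet power `t ^ k`;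
the identity is the coefficientwise form of `log ζ = log (1 + t) = ∑ (-1)^(k+1) t^k / k`.
Pointwise multiplication by `log` is a derivation of the Dirichlet ring with `log · t = log`, hence
`log · t^(k+1) = (k+1) (log * t^k)`. Summing the alternating series,
`∑_{k<K} (-1)^k log * t^k = Λ * ζ * ∑_{k<K} (1 - ζ)^k = Λ - Λ * (1 - ζ)^K`,
and the last term vanishes at `n` once `n < 2^K`, since `t^K` is supported on `[2^K, ∞)`. -/

open Finset ArithmeticFunction
open scoped ArithmeticFunction.zeta

abbrev OrderedFactorization (k n : ℕ) : Type :=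
  {f : Fin k → ℕ // (∀ i, 2 ≤ f i) ∧ ∏ i, f i = n}

namespace OrderedFactorization

variable {k n : ℕ}

theorem two_pow_le (f : OrderedFactorization k n) : 2 ^ k ≤ n := by
  rw [← f.2.2, ← Fin.prod_const]
  exact prod_le_prod' fun i _ => f.2.1 i

theorem pos (f : OrderedFactorization k n) : 0 < n :=
  (Nat.two_pow_pos k).trans_le f.two_pow_le

theorem apply_le (f : OrderedFactorization k n) (i : Fin k) : f.1 i ≤ n :=
  Nat.le_of_dvd f.pos ((dvd_prod_of_mem f.1 (mem_univ i)).trans (dvd_of_eq f.2.2))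

instance : Finite (OrderedFactorization k n) :=
  Finite.of_injective (fun f i => (⟨f.1 i, Nat.lt_succ_of_le (f.apply_le i)⟩ : Fin (n + 1)))
    fun _ _ h => Subtype.ext <| funext fun i => congrArg Fin.val (congrFun h i)

def consEquiv : OrderedFactorization (k + 1) n ≃
    Σ x : {x ∈ n.divisorsAntidiagonal | 2 ≤ x.1}, OrderedFactorization k x.1.2 where
  toFun f := ⟨⟨(f.1 0, ∏ i : Fin k, f.1 i.succ), by
      rw [mem_filter, Nat.mem_divisorsAntidiagonal, ← Fin.prod_univ_succ, f.2.2]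
      exact ⟨⟨rfl, f.pos.ne'⟩, f.2.1 0⟩⟩,
    ⟨Fin.tail f.1, fun i => f.2.1 i.succ, rfl⟩⟩
  invFun x := ⟨Fin.cons x.1.1.1 x.2.1, Fin.cases (mem_filter.1 x.1.2).2 x.2.2.1, by
    rw [Fin.prod_cons, x.2.2.2]
    exact (Nat.mem_divisorsAntidiagonal.1 (mem_filter.1 x.1.2).1).1⟩
  left_inv f := Subtype.ext (Fin.cons_self_tail f.1)
  right_inv := by
    rintro ⟨x, g, hg, hgm⟩
    exact Sigma.subtype_ext (Subtype.ext (Prod.ext rfl hgm)) rfl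

end OrderedFactorization

theorem tau'_eq_zero_of_lt_two_pow {k n : ℕ} (h : n < 2 ^ k) : tau' k n = 0 :=
  Nat.card_eq_zero.2 <| .inl ⟨fun f : OrderedFactorization k n => h.not_ge f.two_pow_le⟩

theorem tau'_zero_left (n : ℕ) : tau' 0 n = if n = 1 then 1 else 0 := by
  split_ifs with h
  · subst h
    exact Nat.card_eq_one_iff_unique.2
      ⟨⟨fun f g => Subtype.ext (Subsingleton.elim _ _)⟩, ⟨⟨Fin.elim0, fun i => i.elim0, rfl⟩⟩⟩
  · exact Nat.card_eq_zero.2 <| .inl ⟨fun f => h f.2.2.symm⟩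

theorem tau'_succ_left (k n : ℕ) :
    tau' (k + 1) n = ∑ x ∈ n.divisorsAntidiagonal with 2 ≤ x.1, tau' k x.2 := by
  refine (Nat.card_congr OrderedFactorization.consEquiv).trans ?_
  rw [Nat.card_sigma]
  exact sum_coe_sort _ fun x : ℕ × ℕ => tau' k x.2

namespace ArithmeticFunction

theorem sum_apply {R ι : Type*} [AddCommMonoid R] (s : Finset ι) (F : ι → ArithmeticFunction R)
    (n : ℕ) : (∑ i ∈ s, F i) n = ∑ i ∈ s, F i n := by
  induction s using Finset.cons_induction <;> simp [*]

theorem mul_apply_eq_zero_of_lt {R : Type*} [Semiring R] {f g : ArithmeticFunction R} {N n : ℕ}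
    (hg : ∀ m < N, g m = 0) (hn : n < N) : (f * g) n = 0 := by
  refine mul_apply.trans (sum_eq_zero fun x hx => ?_)
  obtain ⟨hx, hn0⟩ := Nat.mem_divisorsAntidiagonal.1 hx
  rw [hg x.2 ((Nat.le_of_dvd (Nat.pos_of_ne_zero hn0) (Dvd.intro_left _ hx)).trans_lt hn), mul_zero]

theorem zeta_sub_one_apply {R : Type*} [AddGroupWithOne R] (n : ℕ) :
    ((ζ : ArithmeticFunction R) - 1) n = if 2 ≤ n then 1 else 0 := by
  rcases n with _ | _ | n <;> simp [sub_eq_add_neg]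

theorem zeta_sub_one_pow_apply {R : Type*} [Ring R] (k n : ℕ) :
    (((ζ : ArithmeticFunction R) - 1) ^ k) n = tau' k n := by
  induction k generalizing n with
  | zero => simp [tau'_zero_left, one_apply]
  | succ k ih =>
    rw [pow_succ', mul_apply, tau'_succ_left, Nat.cast_sum, sum_filter]
    refine sum_congr rfl fun x _ => ?_
    rw [zeta_sub_one_apply, ih]
    split_ifs <;> simp

theorem log_pmul_mul (f g : ArithmeticFunction ℝ) :
    log.pmul (f * g) = log.pmul f * g + f * log.pmul g := by
  ext n
  simp only [pmul_apply, mul_apply, add_apply, log_apply, mul_sum, ← sum_add_distrib]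
  refine sum_congr rfl fun x hx => ?_
  obtain ⟨hx, hn⟩ := Nat.mem_divisorsAntidiagonal.1 hx
  rw [← hx, Nat.cast_mul, Real.log_mul (by exact_mod_cast left_ne_zero_of_mul (hx ▸ hn))
    (by exact_mod_cast right_ne_zero_of_mul (hx ▸ hn))]
  ring

theorem log_pmul_pow_succ (f : ArithmeticFunction ℝ) (k : ℕ) :
    log.pmul (f ^ (k + 1)) = ((k : ℝ) + 1) • (log.pmul f * f ^ k) := by
  induction k with
  | zero => simp
  | succ k ih =>
    rw [pow_succ', log_pmul_mul, ih, mul_smul_comm, mul_left_comm, ← pow_succ']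
    push_cast
    module

theorem log_pmul_zeta_sub_one : log.pmul ((ζ : ArithmeticFunction ℝ) - 1) = log := by
  ext n
  rw [pmul_apply, zeta_sub_one_apply]
  rcases n with _ | _ | n <;> simp

theorem log_mul_zeta_sub_one_pow_apply (k n : ℕ) :
    (log * ((ζ : ArithmeticFunction ℝ) - 1) ^ k) n = Real.log n * tau' (k + 1) n / (k + 1) := by
  have := congrArg (· n) (log_pmul_pow_succ ((ζ : ArithmeticFunction ℝ) - 1) k)
  simp only [pmul_apply, smul_map, smul_eq_mul, log_pmul_zeta_sub_one, zeta_sub_one_pow_apply,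
    log_apply] at this
  rw [this]
  field_simp

theorem one_sub_zeta_pow (k : ℕ) :
    (1 - (ζ : ArithmeticFunction ℝ)) ^ k = (-1 : ℝ) ^ k • ((ζ : ArithmeticFunction ℝ) - 1) ^ k := by
  rw [← neg_sub, ← neg_one_smul ℝ ((ζ : ArithmeticFunction ℝ) - 1), smul_pow]

theorem vonMangoldt_apply_eq_sum {K n : ℕ} (hn : n < 2 ^ K) :
    vonMangoldt n = ∑ k ∈ range K, (-1) ^ k * (log * ((ζ : ArithmeticFunction ℝ) - 1) ^ k) n := by
  have hgeom : log * ∑ k ∈ range K, (1 - (ζ : ArithmeticFunction ℝ)) ^ k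
      + vonMangoldt * (1 - (ζ : ArithmeticFunction ℝ)) ^ K = vonMangoldt := by
    rw [← vonMangoldt_mul_zeta]
    linear_combination vonMangoldt * mul_neg_geom_sum (1 - (ζ : ArithmeticFunction ℝ)) K
  have htail : (vonMangoldt * (1 - (ζ : ArithmeticFunction ℝ)) ^ K) n = 0 := by
    rw [one_sub_zeta_pow, mul_smul_comm, smul_map, mul_apply_eq_zero_of_lt (fun m hm => by
      rw [zeta_sub_one_pow_apply, tau'_eq_zero_of_lt_two_pow hm, Nat.cast_zero]) hn, smul_zero]
  rw [← hgeom, add_apply, htail, add_zero, mul_sum, sum_apply]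
  simp only [one_sub_zeta_pow, mul_smul_comm, smul_map, smul_eq_mul]

end ArithmeticFunction

/-- **Linnik's identity**: for every integer `n ≥ 2`,
`Λ(n)/log n = ∑_{k ≥ 1} ((−1)^{k+1}/k) · τ'_k(n)` (the sum is finite since
`τ'_k(n) = 0` for `k > log n / log 2`; the `k = 0` term below vanishes since
`τ'_0(n) = 0` for `n ≥ 2`). -/
theorem linnik_identity (n : ℕ) (hn : 2 ≤ n) :
    ArithmeticFunction.vonMangoldt n / Real.log n
      = ∑' k : ℕ, ((-1 : ℝ) ^ (k + 1) / k) * tau' k n := by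
  have hlog : Real.log n ≠ 0 := (Real.log_pos (by exact_mod_cast hn)).ne'
  have hsupp (k : ℕ) (hk : k ∉ range (n + 1)) : (-1 : ℝ) ^ (k + 1) / k * tau' k n = 0 := by
    rw [tau'_eq_zero_of_lt_two_pow (n.lt_two_pow_self.trans_le (Nat.pow_le_pow_right two_pos
      (by simp only [mem_range, not_lt] at hk; omega))), Nat.cast_zero, mul_zero]
  rw [tsum_eq_sum hsupp, sum_range_succ', Nat.cast_zero, div_zero, zero_mul, add_zero,
    vonMangoldt_apply_eq_sum n.lt_two_pow_self, sum_div]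
  refine sum_congr rfl fun k _ => ?_
  rw [log_mul_zeta_sub_one_pow_apply]
  field_simp
  push_cast
  ring
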